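/- arXiv:math/0601703 — 5 statements merged into one kernel-verified Lean document; each statement's English description precedes it below -/
import Mathlib

section
/- Let u(x) be a polynomial of degree l with simple roots t_1,…,t_l, none equal to any z_s. Then u satisfies a differential equation F u'' + G u' + H u = 0 with H a polynomial of degree at most n−2 (where F(x)=∏_{s=1}^n (x−z_s) and G/F = −∑_s m_s/(x−z_s)) if and only if for each j, ∑_{s=1}^n m_s/(t_j−z_s) = ∑_{k≠j} 2/(t_j−t_k). -/
open Polynomial Finset

private lemma eval_deriv_prod {ι : Type*} [DecidableEq ι] (s : Finset ι) (c : ι → ℂ) (x : ℂ) :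
    (derivative (∏ i ∈ s, (X - C (c i)))).eval x
      = ∑ i ∈ s, ∏ k ∈ s.erase i, (x - c k) := by
  induction s using Finset.induction with
  | empty => simp
  | insert a s' ha ih =>
    have h1 : ∀ i ∈ s', ∏ k ∈ (insert a s').erase i, (x - c k)
        = (x - c a) * ∏ k ∈ s'.erase i, (x - c k) := by
      intro i hi
      rw [Finset.erase_insert_of_ne (fun h : a = i => ha (h.symm ▸ hi)), Finset.prod_insert
        (fun h => ha (Finset.mem_of_mem_erase h))]
    rw [Finset.prod_insert ha, derivative_mul, Finset.sum_insert ha, Finset.erase_insert ha,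
      Finset.sum_congr rfl h1]
    simp only [derivative_sub, derivative_X, derivative_C, sub_zero, one_mul, eval_add, eval_mul,
      eval_sub, eval_X, eval_C, ih, eval_prod, Finset.mul_sum]

private lemma key (n l : ℕ) (z : Fin n → ℂ) (m : Fin n → ℂ) (t : Fin l → ℂ)
    (ht : Function.Injective t) (htz : ∀ j s, t j ≠ z s) (j : Fin l) :
    ((∏ s, (X - C (z s))) * derivative (derivative (∏ j, (X - C (t j))))
        + (-(∑ s, C (m s) * ∏ k ∈ univ.erase s, (X - C (z k)))) *
            derivative (∏ j, (X - C (t j)))).eval (t j) = 0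
    ↔ ∑ s, m s / (t j - z s) = ∑ k ∈ univ.erase j, 2 / (t j - t k) := by
  set a := t j with ha
  set A := ∏ k ∈ univ.erase j, (a - t k) with hA
  set Fa := ∏ s, (a - z s) with hFa
  have hdk : ∀ k ∈ univ.erase j, a - t k ≠ 0 := by
    intro k hk
    exact sub_ne_zero.mpr (fun h => (Finset.ne_of_mem_erase hk) (ht h).symm)
  have hAne : A ≠ 0 := Finset.prod_ne_zero_iff.mpr hdk
  have hFne : Fa ≠ 0 :=
    Finset.prod_ne_zero_iff.mpr (fun s _ => sub_ne_zero.mpr (htz j s))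
  -- eval of u'
  have h1 : (derivative (∏ j, (X - C (t j)))).eval a = A := by
    rw [eval_deriv_prod]
    exact Finset.sum_eq_single_of_mem j (mem_univ j) (fun i _ hij =>
      Finset.prod_eq_zero (Finset.mem_erase.mpr ⟨hij.symm, mem_univ j⟩) (by simp [ha]))
  -- eval of u''
  have h2 : (derivative (derivative (∏ j, (X - C (t j))))).eval a
      = A * ∑ k ∈ univ.erase j, 2 / (a - t k) := by
    have hu : (∏ j, (X - C (t j))) = (X - C a) * ∏ k ∈ univ.erase j, (X - C (t k)) :=
      (Finset.mul_prod_erase univ _ (mem_univ j)).symm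
    have hd : derivative ((X - C a) * ∏ k ∈ univ.erase j, (X - C (t k)))
        = (∏ k ∈ univ.erase j, (X - C (t k)))
          + (X - C a) * derivative (∏ k ∈ univ.erase j, (X - C (t k))) := by
      rw [derivative_mul]; simp
    rw [hu, hd, derivative_add, derivative_mul]
    simp only [derivative_sub, derivative_X, derivative_C, sub_zero, one_mul, eval_add, eval_mul,
      eval_sub, eval_X, eval_C, sub_self, zero_mul, add_zero, zero_add]
    rw [eval_deriv_prod, Finset.mul_sum]
    have hterm : ∀ i ∈ univ.erase j, ∏ k ∈ (univ.erase j).erase i, (a - t k) = A / (a - t i) := by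
      intro i hi
      rw [eq_div_iff (hdk i hi), mul_comm, hA, ← Finset.mul_prod_erase _ _ hi]
    rw [Finset.sum_congr rfl hterm, ← Finset.sum_add_distrib]
    exact Finset.sum_congr rfl (fun i hi => by ring)
  -- eval of G
  have h3 : (-(∑ s, C (m s) * ∏ k ∈ univ.erase s, (X - C (z k)))).eval a
      = -(Fa * ∑ s, m s / (a - z s)) := by
    simp only [eval_neg, eval_finset_sum, eval_mul, eval_C, eval_prod, eval_sub, eval_X, neg_inj,
      Finset.mul_sum]
    refine Finset.sum_congr rfl (fun s _ => ?_)
    have hzs : a - z s ≠ 0 := sub_ne_zero.mpr (htz j s)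
    have : ∏ k ∈ univ.erase s, (a - z k) = Fa / (a - z s) := by
      rw [eq_div_iff hzs, mul_comm, hFa, ← Finset.mul_prod_erase _ _ (mem_univ s)]
    rw [this]
    field_simp
  have hF : eval a (∏ s, (X - C (z s))) = Fa := by rw [hFa]; simp [eval_prod]
  rw [eval_add, eval_mul, eval_mul, h1, h2, h3, hF]
  rw [show Fa * (A * ∑ k ∈ univ.erase j, 2 / (a - t k)) + -(Fa * ∑ s, m s / (a - z s)) * A
      = (Fa * A) * ((∑ k ∈ univ.erase j, 2 / (a - t k)) - ∑ s, m s / (a - z s)) by ring,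
    mul_eq_zero, sub_eq_zero]
  simp [hFne, hAne, eq_comm, mul_eq_zero]

/-- For `F = ∏ (X - z s)`, `G` with `G/F = -∑ m_s/(x - z_s)`, and
`u = ∏ (X - t j)` a polynomial of degree `l` with simple roots `t_j` avoiding the `z_s`,
there exists `H` of degree `≤ n - 2` with `F u'' + G u' + H u = 0` iff the roots satisfy
the Bethe ansatz (critical point) equations. -/
theorem stmt_0 (n l : ℕ) (z : Fin n → ℂ) (hz : Function.Injective z)
    (m : Fin n → ℂ) (t : Fin l → ℂ) (ht : Function.Injective t)
    (htz : ∀ j s, t j ≠ z s) :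
    (∃ H : Polynomial ℂ, H.degree ≤ (n - 2 : ℕ) ∧
      (∏ s, (X - C (z s))) * derivative (derivative (∏ j, (X - C (t j))))
        + (-(∑ s, C (m s) * ∏ k ∈ univ.erase s, (X - C (z k)))) *
            derivative (∏ j, (X - C (t j)))
        + H * (∏ j, (X - C (t j))) = 0)
    ↔ ∀ j, ∑ s, m s / (t j - z s) = ∑ k ∈ univ.erase j, 2 / (t j - t k) := by
  set u : Polynomial ℂ := ∏ j, (X - C (t j)) with hu
  set F : Polynomial ℂ := ∏ s, (X - C (z s)) with hF
  set G : Polynomial ℂ := -(∑ s, C (m s) * ∏ k ∈ univ.erase s, (X - C (z k))) with hG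
  have humonic : u.Monic := monic_prod_of_monic _ _ (fun _ _ => monic_X_sub_C _)
  have hudeg : u.natDegree = l := by
    rw [hu, natDegree_prod _ _ (fun i _ => X_sub_C_ne_zero (t i))]
    simp
  have huroot : ∀ j, u.eval (t j) = 0 := fun j => by
    rw [hu, eval_prod]
    exact Finset.prod_eq_zero (mem_univ j) (by simp)
  constructor
  · rintro ⟨H, _, heq⟩ j
    have h0 : (F * derivative (derivative u) + G * derivative u).eval (t j)
        + H.eval (t j) * u.eval (t j) = 0 := by
      have := congrArg (eval (t j)) heq
      simpa using this
    rw [huroot j, mul_zero, add_zero] at h0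
    exact (key n l z m t ht htz j).mp h0
  · intro hbethe
    set P : Polynomial ℂ := F * derivative (derivative u) + G * derivative u with hP
    have hdvd : u ∣ P := by
      rw [hu]
      refine Fintype.prod_dvd_of_coprime (pairwise_coprime_X_sub_C ht) (fun j => ?_)
      rw [dvd_iff_isRoot]
      exact (key n l z m t ht htz j).mpr (hbethe j)
    obtain ⟨H', hH'⟩ := hdvd
    refine ⟨-H', ?_, by rw [hH']; ring⟩
    rcases eq_or_ne H' 0 with h0 | h0
    · simp [h0]
    -- degree bound
    have hPdeg : P.natDegree ≤ l + (n - 2) := by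
      have hFdeg : F.natDegree = n := by
        rw [hF, natDegree_prod _ _ (fun i _ => X_sub_C_ne_zero (z i))]
        simp
      have hu' : (derivative u).natDegree ≤ l - 1 := hudeg ▸ natDegree_derivative_le u
      refine le_trans (natDegree_add_le _ _) (max_le ?_ ?_)
      · rcases le_or_gt l 1 with hl | hl
        · have hd0 : (derivative u).natDegree = 0 := by omega
          obtain ⟨c, hc⟩ := natDegree_eq_zero.mp hd0
          rw [← hc]
          simp
        · have hu'' : (derivative (derivative u)).natDegree ≤ l - 2 := by
            have := natDegree_derivative_le (derivative u)
            omega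
          calc (F * derivative (derivative u)).natDegree
              ≤ F.natDegree + (derivative (derivative u)).natDegree := natDegree_mul_le
            _ ≤ l + (n - 2) := by rw [hFdeg]; omega
      · rcases Nat.eq_zero_or_pos n with hn | hn
        · have : G = 0 := by
            subst hn
            simp [hG]
          rw [this]; simp
        rcases Nat.eq_zero_or_pos l with hl | hl
        · have : u = 1 := by
            subst hl
            simp [hu]
          rw [this]; simp
        have hGdeg : G.natDegree ≤ n - 1 := by
          rw [hG, natDegree_neg]
          refine natDegree_sum_le_of_forall_le _ _ (fun s _ => ?_)
          have h5 : (∏ k ∈ univ.erase s, (X - C (z k))).natDegree ≤ n - 1 := by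
            refine le_trans (natDegree_prod_le _ _) ?_
            calc ∑ k ∈ univ.erase s, (X - C (z k)).natDegree
                = (univ.erase s).card := by simp
              _ ≤ n - 1 := by simp [Finset.card_erase_of_mem]
          calc (C (m s) * ∏ k ∈ univ.erase s, (X - C (z k))).natDegree
              ≤ (C (m s)).natDegree + (∏ k ∈ univ.erase s, (X - C (z k))).natDegree :=
                natDegree_mul_le
            _ ≤ n - 1 := by simp only [natDegree_C, Nat.zero_add]; exact h5
        calc (G * derivative u).natDegree
            ≤ G.natDegree + (derivative u).natDegree := natDegree_mul_le
          _ ≤ l + (n - 2) := by omega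
    have : u.natDegree + H'.natDegree = P.natDegree := (humonic.natDegree_mul' h0).symm ▸ congrArg natDegree hH'.symm
    rw [degree_neg, ← natDegree_le_iff_degree_le]
    omega
end

section
/- If u(x) is a polynomial of degree l whose roots t_1,…,t_l are simple and satisfy the Bethe ansatz equations ∑_{s=1}^n m_s/(t_j−z_s) = ∑_{k≠j} 2/(t_j−t_k) for all j, and no t_j equals any z_s, then H(x) := (−F(x)u''(x) − G(x)u'(x))/u(x) is a polynomial of degree at most n−2. -/
/-!
Write `u = ∏ (X - t j)`, `F = ∏ (X - z s)` and `S = -G = ∑ m s ∏_{k ≠ s} (X - z k)`. At a root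
`t j`, writing `u = (X - t j) w`, one has `u'(t j) = w(t j)` and `u''(t j) = 2 w'(t j)`, and the
logarithmic derivatives give `S(t j) = F(t j) ∑ m s / (t j - z s)` and
`w'(t j) = w(t j) ∑_{k ≠ j} 1 / (t j - t k)`. Hence `S u' - F u''` vanishes at `t j` exactly by the
Bethe equation, so the simple-rooted `u` divides it; the quotient has degree at most `n - 2`
because `deg S ≤ n - 1` and `deg F = n`.
-/

open Polynomial Finset Lagrange

section Field

variable {K ι : Type*} [Field K] [DecidableEq ι] {s : Finset ι} {v : ι → K} {x : K}

theorem eval_sum_C_mul_nodal_erase (c : ι → K) (hx : ∀ i ∈ s, x ≠ v i) :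
    eval x (∑ i ∈ s, C (c i) * nodal (s.erase i) v) =
      eval x (nodal s v) * ∑ i ∈ s, c i / (x - v i) := by
  rw [eval_finsetSum, mul_sum]
  refine sum_congr rfl fun i hi => ?_
  have hxi : x - v i ≠ 0 := sub_ne_zero.2 (hx i hi)
  rw [nodal_eq_mul_nodal_erase hi, eval_mul, eval_mul, eval_C, eval_sub, eval_X, eval_C]
  field_simp

theorem eval_derivative_nodal (hx : ∀ i ∈ s, x ≠ v i) :
    eval x (derivative (nodal s v)) = eval x (nodal s v) * ∑ i ∈ s, 1 / (x - v i) := by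
  simpa [derivative_nodal] using eval_sum_C_mul_nodal_erase (fun _ => 1) hx

theorem natDegree_sum_C_mul_nodal_erase_le (c : ι → K) :
    (∑ i ∈ s, C (c i) * nodal (s.erase i) v).natDegree ≤ #s - 1 :=
  natDegree_sum_le_of_forall_le _ _ fun i hi =>
    (natDegree_C_mul_le _ _).trans (by rw [natDegree_nodal, card_erase_of_mem hi])

end Field

section CommRing

variable {R : Type*} [CommRing R]

theorem eval_derivative_X_sub_C_mul (a : R) (w : R[X]) :
    eval a (derivative ((X - C a) * w)) = eval a w := by
  simp

theorem eval_derivative_derivative_X_sub_C_mul (a : R) (w : R[X]) :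
    eval a (derivative (derivative ((X - C a) * w))) = 2 * eval a (derivative w) := by
  simp [derivative_mul, two_mul]

theorem natDegree_mul_iterate_derivative_le {p q : R[X]} {a k : ℕ} (hp : p.natDegree ≤ a + k) :
    (p * derivative^[k] q).natDegree ≤ a + q.natDegree := by
  rcases lt_or_ge q.natDegree k with hq | hq
  · simp [iterate_derivative_eq_zero hq]
  · have := natDegree_iterate_derivative q k
    exact natDegree_mul_le.trans (by omega)

theorem degree_le_of_natDegree_mul_monic_le [Nontrivial R] {p q : R[X]} (hq : q.Monic) {a : ℕ}
    (h : (p * q).natDegree ≤ a + q.natDegree) : p.degree ≤ a := by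
  rcases eq_or_ne p 0 with rfl | hp
  · simp
  rw [mul_comm, hq.natDegree_mul' hp] at h
  exact degree_le_of_natDegree_le (by omega)

end CommRing

theorem eval_bethe_eq_zero {K ι κ : Type*} [Field K] [Fintype ι] [DecidableEq ι] [Fintype κ]
    [DecidableEq κ] {z m : κ → K} {t : ι → K} (ht : Function.Injective t)
    (htz : ∀ j s, t j ≠ z s) (j : ι)
    (hBethe : ∑ s, m s / (t j - z s) = ∑ k ∈ univ.erase j, 2 / (t j - t k)) :
    eval (t j) ((∑ s, C (m s) * nodal (univ.erase s) z) * derivative (nodal univ t)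
      - nodal univ z * derivative (derivative (nodal univ t))) = 0 := by
  have htt : ∀ k ∈ univ.erase j, t j ≠ t k := fun k hk h => (mem_erase.1 hk).1 (ht h).symm
  rw [nodal_eq_mul_nodal_erase (mem_univ j), eval_sub, eval_mul, eval_mul,
    eval_derivative_X_sub_C_mul, eval_derivative_derivative_X_sub_C_mul,
    eval_sum_C_mul_nodal_erase m fun s _ => htz j s, eval_derivative_nodal htt, hBethe]
  simp_rw [← mul_one_div (2 : K), ← mul_sum]
  ring

theorem stmt_1_general (n l : ℕ) (z : Fin n → ℂ)
    (m : Fin n → ℂ) (t : Fin l → ℂ) (ht : Function.Injective t)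
    (htz : ∀ j s, t j ≠ z s)
    (hBethe : ∀ j, ∑ s, m s / (t j - z s) = ∑ k ∈ univ.erase j, 2 / (t j - t k)) :
    ∃ H : Polynomial ℂ, H.degree ≤ (n - 2 : ℕ) ∧
      -((∏ s, (X - C (z s))) * derivative (derivative (∏ j, (X - C (t j)))))
        - (-(∑ s, C (m s) * ∏ k ∈ univ.erase s, (X - C (z k)))) *
            derivative (∏ j, (X - C (t j)))
      = H * (∏ j, (X - C (t j))) := by
  set S : ℂ[X] := ∑ s, C (m s) * nodal (univ.erase s) z
  set P := S * derivative (nodal univ t) - nodal univ z * derivative (derivative (nodal univ t))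
  change ∃ H : ℂ[X], H.degree ≤ (n - 2 : ℕ) ∧
    -(nodal univ z * derivative (derivative (nodal univ t))) - -S * derivative (nodal univ t) =
      H * nodal univ t
  obtain ⟨H, hH⟩ : nodal univ t ∣ P :=
    Fintype.prod_dvd_of_coprime (pairwise_coprime_X_sub_C ht) fun j =>
      dvd_iff_isRoot.2 (eval_bethe_eq_zero ht htz j (hBethe j))
  refine ⟨H, degree_le_of_natDegree_mul_monic_le (nodal_monic (s := univ) (v := t)) ?_, ?_⟩
  · have hS : S.natDegree ≤ n - 2 + 1 :=
      (natDegree_sum_C_mul_nodal_erase_le m).trans (by rw [card_univ, Fintype.card_fin]; omega)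
    have hF : (nodal univ z).natDegree ≤ n - 2 + 2 := by
      rw [natDegree_nodal, card_univ, Fintype.card_fin]; omega
    rw [mul_comm, ← hH]
    refine (natDegree_sub_le _ _).trans (max_le ?_ ?_)
    · exact natDegree_mul_iterate_derivative_le (k := 1) hS
    · exact natDegree_mul_iterate_derivative_le (k := 2) hF
  · linear_combination hH

/-- If `u = ∏ (X - t j)` has simple roots satisfying the Bethe ansatz
equations, none equal to any `z_s`, then `H := (-F u'' - G u')/u` is a polynomial of
degree at most `n - 2`; i.e. `u` divides `-F u'' - G u'` with quotient of degree `≤ n-2`. -/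
theorem stmt_1 (n l : ℕ) (z : Fin n → ℂ) (hz : Function.Injective z)
    (m : Fin n → ℂ) (t : Fin l → ℂ) (ht : Function.Injective t)
    (htz : ∀ j s, t j ≠ z s)
    (hBethe : ∀ j, ∑ s, m s / (t j - z s) = ∑ k ∈ univ.erase j, 2 / (t j - t k)) :
    ∃ H : Polynomial ℂ, H.degree ≤ (n - 2 : ℕ) ∧
      -((∏ s, (X - C (z s))) * derivative (derivative (∏ j, (X - C (t j)))))
        - (-(∑ s, C (m s) * ∏ k ∈ univ.erase s, (X - C (z k)))) *
            derivative (∏ j, (X - C (t j)))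
      = H * (∏ j, (X - C (t j))) :=
  stmt_1_general n l z m t ht htz hBethe
end

section
/- For the Jacobi differential equation (1−x²)u'' + (β−α−(α+β+2)x)u' + λ u = 0: for each nonnegative integer l, taking λ = l(l+α+β+1) yields a polynomial solution of degree l, provided α+β+1+k ≠ 0 for 0 ≤ k ≤ 2l−1 (e.g. α, β > −1). -/
open Polynomial

noncomputable def jc (l : ℕ) (α β : ℝ) : ℕ → ℝ
  | 0 => 1
  | 1 => -((β - α) * l) / (2 * l - 1 + (α + β + 1))
  | j + 2 => -(((l:ℝ) - j) * ((l:ℝ) - j - 1) * jc l α β j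
      + (β - α) * ((l:ℝ) - j - 1) * jc l α β (j+1))
      / (((j:ℝ) + 2) * (2 * l - (j + 2) + (α + β + 1)))

noncomputable def jg (l : ℕ) (α β : ℝ) (n : ℕ) : ℝ :=
  if n ≤ l then jc l α β (l - n) else 0

lemma jkey (l : ℕ) (α β : ℝ)
    (hαβ : ∀ k : ℕ, k < 2 * l → α + β + 1 + (k : ℝ) ≠ 0) (n : ℕ) :
    ((n:ℝ)+2)*((n:ℝ)+1) * jg l α β (n+2) + (β-α)*((n:ℝ)+1) * jg l α β (n+1)
      + ((l:ℝ)-(n:ℝ))*((l:ℝ)+(n:ℝ)+α+β+1) * jg l α β n = 0 := by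
  rcases lt_trichotomy n l with h | h | h
  · -- n < l
    obtain ⟨j, hl⟩ := Nat.exists_eq_add_of_lt h
    rcases j with _ | j
    · -- l = n + 1
      have hl' : l = n + 1 := by omega
      subst hl'
      have h2 : jg (n+1) α β (n+2) = 0 := by simp [jg]
      have h1 : jg (n+1) α β (n+1) = jc (n+1) α β 0 := by
        rw [jg, if_pos (by omega)]; congr 1; omega
      have h0 : jg (n+1) α β n = jc (n+1) α β 1 := by
        rw [jg, if_pos (by omega)]; congr 1; omega
      rw [h2, h1, h0, jc, jc]
      have hd : 2 * (((n:ℕ)+1:ℕ):ℝ) - 1 + (α + β + 1) ≠ 0 := by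
        have := hαβ (2*(n+1)-1) (by omega)
        intro hc; apply this
        push_cast [Nat.cast_sub (by omega : 1 ≤ 2*(n+1))]
        push_cast at hc; linarith
      push_cast
      push_cast at hd
      have hd2 : (2 + (n:ℝ) * 2 + β + α) ≠ 0 := fun hc => hd (by linarith)
      field_simp [hd2]
      ring
    · -- l = n + j + 2
      have hl' : l = n + j + 2 := by omega
      subst hl'
      have h2 : jg (n+j+2) α β (n+2) = jc (n+j+2) α β j := by
        rw [jg, if_pos (by omega)]; congr 1; omega
      have h1 : jg (n+j+2) α β (n+1) = jc (n+j+2) α β (j+1) := by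
        rw [jg, if_pos (by omega)]; congr 1; omega
      have h0 : jg (n+j+2) α β n = jc (n+j+2) α β (j+2) := by
        rw [jg, if_pos (by omega)]; congr 1; omega
      rw [h2, h1, h0, jc]
      have hj2 : ((j:ℝ) + 2) ≠ 0 := by positivity
      have hs : 2 * (((n+j+2 : ℕ)):ℝ) - ((j:ℝ) + 2) + (α + β + 1) ≠ 0 := by
        have := hαβ (2*(n+j+2)-(j+2)) (by omega)
        intro hc; apply this
        push_cast [Nat.cast_sub (by omega : j+2 ≤ 2*(n+j+2))]
        push_cast at hc; linarith
      push_cast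
      push_cast at hs
      field_simp [hj2, hs]
      ring
  · -- n = l
    subst h
    have h2 : jg n α β (n+2) = 0 := by simp [jg]
    have h1 : jg n α β (n+1) = 0 := by simp [jg]
    rw [h2, h1]; ring
  · -- l < n
    have h2 : jg l α β (n+2) = 0 := by simp [jg]; omega
    have h1 : jg l α β (n+1) = 0 := by simp [jg]; omega
    have h0 : jg l α β n = 0 := by simp [jg]; omega
    rw [h2, h1, h0]; ring
open Polynomial

noncomputable def ju (l : ℕ) (α β : ℝ) : Polynomial ℝ :=
  ∑ k ∈ Finset.range (l+1), C (jg l α β k) * X ^ k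

lemma ju_coeff (l : ℕ) (α β : ℝ) (n : ℕ) : (ju l α β).coeff n = jg l α β n := by
  rw [ju, finset_sum_coeff]
  simp only [coeff_C_mul, coeff_X_pow, mul_ite, mul_one, mul_zero]
  rw [Finset.sum_ite_eq (Finset.range (l+1)) n (jg l α β)]
  by_cases h : n ≤ l
  · simp [Finset.mem_range, Nat.lt_succ_iff, h]
  · simp [Finset.mem_range, Nat.lt_succ_iff, h, jg]

lemma ju_degree (l : ℕ) (α β : ℝ) : (ju l α β).degree = (l : ℕ) := by
  have hc : (ju l α β).coeff l = 1 := by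
    rw [ju_coeff, jg, if_pos le_rfl, Nat.sub_self, jc]
  apply le_antisymm
  · apply (degree_sum_le _ _).trans
    apply Finset.sup_le
    intro k hk
    exact (degree_C_mul_X_pow_le _ _).trans
      (by exact_mod_cast Nat.cast_le.mpr (Nat.lt_succ_iff.mp (Finset.mem_range.mp hk)))
  · exact le_degree_of_ne_zero (by rw [hc]; norm_num)

/-- For the Jacobi differential equation
`(1 - x²)u'' + (β - α - (α+β+2)x)u' + λ u = 0`, taking `λ = l(l+α+β+1)` yields a
polynomial solution of degree exactly `l`, provided `α + β + 1 + k ≠ 0` for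
`0 ≤ k ≤ 2l - 1`. -/
theorem stmt_5 (l : ℕ) (α β : ℝ)
    (hαβ : ∀ k : ℕ, k < 2 * l → α + β + 1 + (k : ℝ) ≠ 0) :
    ∃ u : Polynomial ℝ, u.degree = (l : ℕ) ∧
      (1 - X ^ 2) * derivative (derivative u)
        + (C (β - α) - C (α + β + 2) * X) * derivative u
        + C ((l : ℝ) * ((l : ℝ) + α + β + 1)) * u = 0 := by
  refine ⟨ju l α β, ju_degree l α β, ?_⟩
  have hre : (1 - X ^ 2) * derivative (derivative (ju l α β))
      + (C (β - α) - C (α + β + 2) * X) * derivative (ju l α β)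
      + C ((l : ℝ) * ((l : ℝ) + α + β + 1)) * ju l α β
      = derivative (derivative (ju l α β)) + C (β - α) * derivative (ju l α β)
        + C ((l : ℝ) * ((l : ℝ) + α + β + 1)) * ju l α β
        - (derivative (derivative (ju l α β)) * X ^ 2
          + C (α + β + 2) * derivative (ju l α β) * X ^ 1) := by ring
  rw [hre]
  ext m
  simp only [coeff_sub, coeff_add, coeff_C_mul, coeff_mul_X_pow', coeff_zero,
    coeff_derivative, ju_coeff]
  rcases m with _ | _ | m
  · norm_num
    linear_combination jkey l α β hαβ 0
  · norm_num
    linear_combination jkey l α β hαβ 1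
  · have h2 : 2 ≤ m + 2 := by omega
    have h1 : 1 ≤ m + 2 := by omega
    rw [if_pos h2, if_pos h1]
    simp only [Nat.add_sub_cancel, show m + 2 - 1 = m + 1 from rfl, coeff_derivative, ju_coeff]
    linear_combination (norm := (push_cast; ring1)) jkey l α β hαβ (m + 2)
end

section
/- With W_i = Wr(u_1,…,u_i) nowhere vanishing for i ≤ k, one has for any function u: (d/dx − (log(W_k/W_{k−1}))')⋯(d/dx − (log(W_2/W_1))')(d/dx − (log W_1)') u = Wr(u_1,…,u_k, u)/W_k. -/
/-- The Wronskian determinant `Wr(u₁, …, u_k)(x) = det((d/dx)^(i-1) u_j)(x)`. -/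
noncomputable def wronskian (k : ℕ) (u : Fin k → ℝ → ℝ) (x : ℝ) : ℝ :=
  Matrix.det (Matrix.of fun i j : Fin k => iteratedDeriv (i : ℕ) (u j) x)

/-- `opChain k a f = (d/dx - a k) ⋯ (d/dx - a 1) f`. -/
noncomputable def opChain : ℕ → (ℕ → ℝ → ℝ) → (ℝ → ℝ) → (ℝ → ℝ)
  | 0, _, f => f
  | k + 1, a, f => fun x => deriv (opChain k a f) x - a (k + 1) x * opChain k a f x

open Matrix

lemma hasDerivAt_iteratedDeriv {f : ℝ → ℝ} (hf : ContDiff ℝ (⊤ : ℕ∞) f) (m : ℕ) (x : ℝ) :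
    HasDerivAt (iteratedDeriv m f) (iteratedDeriv (m + 1) f x) x := by
  have h1 : ContDiff ℝ ((⊤ : ℕ∞) : WithTop ℕ∞) (deriv^[m] f) :=
    ContDiff.iterate_deriv m (hf.of_le (by simp))
  rw [← iteratedDeriv_eq_iterate] at h1
  have h2 : DifferentiableAt ℝ (iteratedDeriv m f) x :=
    (h1.differentiable (by simp)).differentiableAt
  rw [iteratedDeriv_succ]
  exact h2.hasDerivAt


lemma hasDerivAt_det {n : ℕ} (M : ℝ → Matrix (Fin n) (Fin n) ℝ)
    (M' : Matrix (Fin n) (Fin n) ℝ) (x : ℝ)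
    (h : ∀ i j, HasDerivAt (fun t => M t i j) (M' i j) x) :
    HasDerivAt (fun t => (M t).det)
      (∑ j, ((M x).updateCol j (fun i => M' i j)).det) x := by
  have key : ∀ t, (M t).det = ∑ σ : Equiv.Perm (Fin n),
      (Equiv.Perm.sign σ : ℝ) * ∏ i, M t (σ i) i := fun t => by
    rw [Matrix.det_apply']
  have H : HasDerivAt
      (fun t => ∑ σ : Equiv.Perm (Fin n), (Equiv.Perm.sign σ : ℝ) * ∏ i, M t (σ i) i)
      (∑ σ : Equiv.Perm (Fin n), (Equiv.Perm.sign σ : ℝ) *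
        ∑ j, (∏ i ∈ Finset.univ.erase j, M x (σ i) i) • M' (σ j) j) x := by
    refine HasDerivAt.fun_sum fun σ _ => HasDerivAt.const_mul _ ?_
    exact HasDerivAt.fun_finsetProd fun i _ => h (σ i) i
  have funeq : (fun t => (M t).det)
      = fun t => ∑ σ : Equiv.Perm (Fin n), (Equiv.Perm.sign σ : ℝ) * ∏ i, M t (σ i) i :=
    funext key
  rw [funeq]
  convert H using 1
  simp_rw [Finset.mul_sum]
  rw [Finset.sum_comm]
  refine Finset.sum_congr rfl fun j _ => ?_
  rw [show (((M x).updateCol j fun i => M' i j)).det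
      = ∑ σ : Equiv.Perm (Fin n), (Equiv.Perm.sign σ : ℝ) *
          ∏ i, ((M x).updateCol j fun i => M' i j) (σ i) i from by
    rw [Matrix.det_apply']]
  refine Finset.sum_congr rfl fun σ _ => ?_
  rw [← Finset.mul_prod_erase _ _ (Finset.mem_univ j)]
  have h1 : ((M x).updateCol j fun i => M' i j) (σ j) j = M' (σ j) j := by
    simp [Matrix.updateCol_apply]
  have h2 : ∏ i ∈ Finset.univ.erase j, ((M x).updateCol j fun i => M' i j) (σ i) i
      = ∏ i ∈ Finset.univ.erase j, M x (σ i) i := by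
    refine Finset.prod_congr rfl fun i hi => ?_
    simp [Matrix.updateCol_apply, (Finset.mem_erase.mp hi).1]
  rw [h1, h2, smul_eq_mul]
  ring


lemma hasDerivAt_wronskian {n : ℕ} (w : Fin (n + 1) → ℝ → ℝ)
    (hw : ∀ j, ContDiff ℝ (⊤ : ℕ∞) (w j)) (x : ℝ) :
    HasDerivAt (wronskian (n + 1) w)
      ((Matrix.of fun i j : Fin (n + 1) =>
        iteratedDeriv (if (i : ℕ) < n then (i : ℕ) else n + 1) (w j) x).det) x := by
  have hfun : wronskian (n + 1) w
      = fun t => (Matrix.of fun i j : Fin (n + 1) => iteratedDeriv (j : ℕ) (w i) t).det := by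
    funext t
    rw [wronskian, ← Matrix.det_transpose]
    congr 1
  rw [hfun]
  have H := hasDerivAt_det
    (fun t => Matrix.of fun i j : Fin (n + 1) => iteratedDeriv (j : ℕ) (w i) t)
    (Matrix.of fun i j : Fin (n + 1) => iteratedDeriv ((j : ℕ) + 1) (w i) x) x
    (fun i j => hasDerivAt_iteratedDeriv (hw i) j x)
  convert H using 1
  rw [Fin.sum_univ_castSucc]
  have hz : ∀ j : Fin n,
      (((Matrix.of fun i j : Fin (n + 1) => iteratedDeriv (j : ℕ) (w i) x).updateCol
        (Fin.castSucc j)) fun i => iteratedDeriv ((Fin.castSucc j : ℕ) + 1) (w i) x).det = 0 := by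
    intro j
    refine Matrix.det_zero_of_column_eq (Fin.castSucc_lt_succ (i := j)).ne fun k => ?_
    simp [Matrix.updateCol_apply, (Fin.castSucc_lt_succ (i := j)).ne']
  simp only [Matrix.of_apply]
  rw [Finset.sum_eq_zero fun j _ => hz j, zero_add]
  rw [← Matrix.det_transpose]
  congr 1
  ext i j
  simp only [Matrix.transpose_apply, Matrix.of_apply, Matrix.updateCol_apply]
  rcases eq_or_ne j (Fin.last n) with h | h
  · subst h
    simp
  · rw [if_neg h, if_pos (Fin.val_lt_last h)]


lemma det_fromBlocks_fin {n m : ℕ} (X : Matrix (Fin (n + m)) (Fin (n + m)) ℝ) :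
    X.det = (Matrix.fromBlocks
      (Matrix.of fun i j : Fin n => X (Fin.castAdd m i) (Fin.castAdd m j))
      (Matrix.of fun (i : Fin n) (j : Fin m) => X (Fin.castAdd m i) (Fin.natAdd n j))
      (Matrix.of fun (i : Fin m) (j : Fin n) => X (Fin.natAdd n i) (Fin.castAdd m j))
      (Matrix.of fun i j : Fin m => X (Fin.natAdd n i) (Fin.natAdd n j))).det := by
  rw [← Matrix.det_submatrix_equiv_self (finSumFinEquiv (m := n) (n := m)) X]
  congr 1
  ext (i | i) (j | j) <;>
    simp [Matrix.fromBlocks, Matrix.submatrix_apply]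


lemma jacobi {n : ℕ} (A : Matrix (Fin n) (Fin n) ℝ) (B : Matrix (Fin n) (Fin 2) ℝ)
    (C : Matrix (Fin 2) (Fin n) ℝ) (D : Matrix (Fin 2) (Fin 2) ℝ) (hA : A.det ≠ 0) :
    (Matrix.fromBlocks A B C D).det * A.det =
      (Matrix.fromBlocks A (Matrix.of fun i (_ : Fin 1) => B i 0)
          (Matrix.of fun (_ : Fin 1) j => C 0 j) (Matrix.of fun _ _ => D 0 0)).det *
        (Matrix.fromBlocks A (Matrix.of fun i (_ : Fin 1) => B i 1)
          (Matrix.of fun (_ : Fin 1) j => C 1 j) (Matrix.of fun _ _ => D 1 1)).det -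
      (Matrix.fromBlocks A (Matrix.of fun i (_ : Fin 1) => B i 1)
          (Matrix.of fun (_ : Fin 1) j => C 0 j) (Matrix.of fun _ _ => D 0 1)).det *
        (Matrix.fromBlocks A (Matrix.of fun i (_ : Fin 1) => B i 0)
          (Matrix.of fun (_ : Fin 1) j => C 1 j) (Matrix.of fun _ _ => D 1 0)).det := by
  have : Invertible A := A.invertibleOfIsUnitDet (isUnit_iff_ne_zero.2 hA)
  rw [Matrix.det_fromBlocks₁₁, Matrix.det_fromBlocks₁₁, Matrix.det_fromBlocks₁₁,
    Matrix.det_fromBlocks₁₁, Matrix.det_fromBlocks₁₁]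
  rw [Matrix.det_fin_two]
  have e1 : ∀ (p q : Fin 2),
      ((Matrix.of fun (_ : Fin 1) (_ : Fin 1) => D p q) -
        (Matrix.of fun (_ : Fin 1) j => C p j) * ⅟A * (Matrix.of fun i (_ : Fin 1) => B i q)).det
      = (D - C * ⅟A * B) p q := by
    intro p q
    rw [Matrix.det_fin_one]
    simp [Matrix.sub_apply, Matrix.mul_apply]
  rw [e1, e1, e1, e1]
  ring


lemma contDiff_snoc {k : ℕ} (u : ℕ → ℝ → ℝ) (hu : ∀ j, ContDiff ℝ (⊤ : ℕ∞) (u j))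
    {v : ℝ → ℝ} (hv : ContDiff ℝ (⊤ : ℕ∞) v) :
    ∀ j : Fin (k + 1),
      ContDiff ℝ (⊤ : ℕ∞) ((Fin.snoc (fun j : Fin k => u j) v : Fin (k + 1) → ℝ → ℝ) j) := by
  intro j
  refine Fin.lastCases ?_ ?_ j
  · rw [Fin.snoc_last]; exact hv
  · intro i; rw [Fin.snoc_castSucc]; exact hu i


lemma wronskian_k_ne_zero (k : ℕ) (u : ℕ → ℝ → ℝ)
    (hW : ∀ i : ℕ, 1 ≤ i → i ≤ k + 1 → ∀ x,
      wronskian i (fun j : Fin i => u j) x ≠ 0) :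
    ∀ x, wronskian k (fun j : Fin k => u j) x ≠ 0 := by
  cases k with
  | zero => intro x; simp [wronskian, Matrix.det_fin_zero]
  | succ m => exact hW (m + 1) (Nat.succ_le_succ (Nat.zero_le _)) (Nat.le_succ _)


lemma wronskian_differentiableAt (k : ℕ) (w : Fin k → ℝ → ℝ)
    (hw : ∀ j, ContDiff ℝ (⊤ : ℕ∞) (w j)) (x : ℝ) :
    DifferentiableAt ℝ (wronskian k w) x := by
  cases k with
  | zero =>
    have : wronskian 0 w = fun _ => (1 : ℝ) := funext fun t => Matrix.det_fin_zero
    rw [this]; exact differentiableAt_const 1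
  | succ m => exact (hasDerivAt_wronskian w hw x).differentiableAt


/-- With `W_i = Wr(u₁,…,u_i)` nowhere vanishing for `i ≤ k`, for any
smooth function `u` one has
`(d/dx - (log(W_k/W_{k-1}))') ⋯ (d/dx - (log W_1)') u = Wr(u₁,…,u_k,u)/W_k`. -/
theorem stmt_8 (k : ℕ) (u : ℕ → ℝ → ℝ) (hu : ∀ j, ContDiff ℝ (⊤ : ℕ∞) (u j))
    (v : ℝ → ℝ) (hv : ContDiff ℝ (⊤ : ℕ∞) v)
    (hW : ∀ i : ℕ, 1 ≤ i → i ≤ k → ∀ x,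
      wronskian i (fun j : Fin i => u j) x ≠ 0) :
    ∀ x : ℝ,
      opChain k
        (fun i x => deriv (wronskian i (fun j : Fin i => u j)) x
            / wronskian i (fun j : Fin i => u j) x
          - deriv (wronskian (i - 1) (fun j : Fin (i - 1) => u j)) x
            / wronskian (i - 1) (fun j : Fin (i - 1) => u j) x)
        v x
      = wronskian (k + 1) (Fin.snoc (fun j : Fin k => u j) v) x
          / wronskian k (fun j : Fin k => u j) x := by
  set a : ℕ → ℝ → ℝ := fun i x => deriv (wronskian i (fun j : Fin i => u j)) x
            / wronskian i (fun j : Fin i => u j) x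
          - deriv (wronskian (i - 1) (fun j : Fin (i - 1) => u j)) x
            / wronskian (i - 1) (fun j : Fin (i - 1) => u j) x with ha
  induction k with
  | zero =>
    intro x
    simp [opChain, wronskian, Matrix.det_fin_one, Matrix.det_fin_zero]
    rfl
  | succ k ih =>
    have hIH : ∀ y, opChain k a v y
        = wronskian (k + 1) (Fin.snoc (fun j : Fin k => u j) v) y
          / wronskian k (fun j : Fin k => u j) y :=
      ih fun i h1 h2 => hW i h1 (h2.trans (Nat.le_succ k))
    intro x
    classical
    -- abbreviations
    set Wk : ℝ → ℝ := wronskian k (fun j : Fin k => u j) with hWk_def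
    set Wk1 : ℝ → ℝ := wronskian (k + 1) (fun j : Fin (k + 1) => u j) with hWk1_def
    set Vk : ℝ → ℝ := wronskian (k + 1) (Fin.snoc (fun j : Fin k => u j) v) with hVk_def
    set Vk1 : ℝ → ℝ := wronskian (k + 1 + 1) (Fin.snoc (fun j : Fin (k + 1) => u j) v) with hVk1_def
    -- entries
    set E : ℕ → ℕ → ℝ := fun d j => iteratedDeriv d (u j) x with hE
    set c : ℕ → ℝ := fun d => iteratedDeriv d v x with hc
    set A : Matrix (Fin k) (Fin k) ℝ := Matrix.of fun i j : Fin k => E i j with hA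
    set B : Matrix (Fin k) (Fin 2) ℝ :=
      Matrix.of fun (i : Fin k) (q : Fin 2) => if q = 0 then E i k else c i with hB
    set C : Matrix (Fin 2) (Fin k) ℝ := Matrix.of fun (p : Fin 2) (j : Fin k) => E (k + p) j with hC
    set D : Matrix (Fin 2) (Fin 2) ℝ :=
      Matrix.of fun (p q : Fin 2) => if q = 0 then E (k + p) k else c (k + p) with hD
    -- nonvanishing
    have hWkx : Wk x ≠ 0 := wronskian_k_ne_zero k u hW x
    have hWk1x : Wk1 x ≠ 0 := hW (k + 1) (Nat.succ_le_succ (Nat.zero_le _)) le_rfl x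
    have hsnoc := contDiff_snoc (k := k) u hu hv
    have hsnoc1 := contDiff_snoc (k := k + 1) u hu hv
    -- derivative facts
    have dVk := hasDerivAt_wronskian (Fin.snoc (fun j : Fin k => u j) v) hsnoc x
    have dWk1 := hasDerivAt_wronskian (fun j : Fin (k + 1) => u j) (fun j => hu j) x
    -- determinant identifications
    have hAdet : Wk x = A.det := rfl
    have hW1 : Wk1 x = (Matrix.fromBlocks A (Matrix.of fun i (_ : Fin 1) => B i 0)
        (Matrix.of fun (_ : Fin 1) j => C 0 j) (Matrix.of fun _ _ => D 0 0)).det := by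
      rw [hWk1_def, wronskian, det_fromBlocks_fin (n := k) (m := 1)]
      congr 1
      ext (i | i) (j | j) <;> simp [hA, hB, hC, hD, hE, hc]
    have hV : Vk x = (Matrix.fromBlocks A (Matrix.of fun i (_ : Fin 1) => B i 1)
        (Matrix.of fun (_ : Fin 1) j => C 0 j) (Matrix.of fun _ _ => D 0 1)).det := by
      rw [hVk_def, wronskian, det_fromBlocks_fin (n := k) (m := 1)]
      congr 1
      ext (i | i) (j | j) <;> simp [Fin.snoc, hA, hB, hC, hD, hE, hc]
    have hV1 : Vk1 x = (Matrix.fromBlocks A B C D).det := by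
      rw [hVk1_def, wronskian, det_fromBlocks_fin (n := k) (m := 2)]
      congr 1
      ext (i | i) (j | j)
      · simp [Fin.snoc, hA, hE, Nat.lt_succ, le_of_lt i.isLt]
      · fin_cases j <;> simp [Fin.snoc, hB, hE, hc]
      · simp [Fin.snoc, hC, hE, Nat.lt_succ, le_of_lt j.isLt]
      · fin_cases i <;> fin_cases j <;> simp [Fin.snoc, hD, hE, hc]
    have hW1' : deriv Wk1 x = (Matrix.fromBlocks A (Matrix.of fun i (_ : Fin 1) => B i 0)
        (Matrix.of fun (_ : Fin 1) j => C 1 j) (Matrix.of fun _ _ => D 1 0)).det := by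
      rw [hWk1_def, dWk1.deriv, det_fromBlocks_fin (n := k) (m := 1)]
      congr 1
      ext (i | i) (j | j) <;> simp [hA, hB, hC, hD, hE, hc, i.isLt]
    have hV' : deriv Vk x = (Matrix.fromBlocks A (Matrix.of fun i (_ : Fin 1) => B i 1)
        (Matrix.of fun (_ : Fin 1) j => C 1 j) (Matrix.of fun _ _ => D 1 1)).det := by
      rw [hVk_def, dVk.deriv, det_fromBlocks_fin (n := k) (m := 1)]
      congr 1
      ext (i | i) (j | j) <;> simp [Fin.snoc, hA, hB, hC, hD, hE, hc, i.isLt]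
    have J : Vk1 x * Wk x = Wk1 x * deriv Vk x - Vk x * deriv Wk1 x := by
      rw [hV1, hAdet, hW1, hV', hV, hW1']
      exact jacobi A B C D (hAdet ▸ hWkx)
    have dWkdiff : DifferentiableAt ℝ Wk x := by
      rw [hWk_def]; exact wronskian_differentiableAt k _ (fun j => hu j) x
    have hopk : opChain k a v = fun y => Vk y / Wk y := funext hIH
    have step : opChain (k + 1) a v x
        = deriv (opChain k a v) x - a (k + 1) x * opChain k a v x := rfl
    rw [step, hopk]
    rw [deriv_fun_div dVk.differentiableAt dWkdiff hWkx]
    rw [ha]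
    beta_reduce
    rw [show wronskian (k + 1) (Fin.snoc (fun j : Fin k => u (j : ℕ)) v) = Vk from rfl,
      show wronskian (k + 1 - 1) (fun j : Fin (k + 1 - 1) => u (j : ℕ)) = Wk from rfl,
      show wronskian (k + 1) (fun j : Fin (k + 1) => u (j : ℕ)) = Wk1 from rfl]
    field_simp
    linear_combination (-(Wk x)) * J
end

section
/- For a polynomial y with simple roots t_1,…,t_l, the function Wr(ỹ,y) can equal T := ∏_s (x−z_s)^{m_s} with ỹ having singularities only at z_1,…,z_n only if for each j, ∑_s m_s/(t_j−z_s) = ∑_{k≠j} 2/(t_j−t_k). -/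
open Finset Polynomial

private lemma aux_derivative_finprod {ι : Type*} [DecidableEq ι] (s : Finset ι)
    (f : ι → Polynomial ℂ) :
    derivative (∏ i ∈ s, f i) = ∑ i ∈ s, (∏ k ∈ s.erase i, f k) * derivative (f i) := by
  induction s using Finset.induction_on with
  | empty => simp
  | @insert a s ha ih =>
    rw [Finset.prod_insert ha, derivative_mul, ih, Finset.sum_insert ha,
      Finset.erase_insert ha, Finset.mul_sum]
    congr 1
    · ring
    refine Finset.sum_congr rfl fun i hi => ?_
    have hai : a ≠ i := fun h => ha (h ▸ hi)
    rw [Finset.erase_insert_of_ne hai,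
      Finset.prod_insert (fun h => ha (Finset.mem_of_mem_erase h))]
    ring

private lemma aux_eval0 {l : ℕ} (t : Fin l → ℂ) (j : Fin l) :
    (∏ k, (X - C (t k))).eval (t j) = 0 := by
  rw [eval_prod]
  exact Finset.prod_eq_zero (mem_univ j) (by simp)

private lemma aux_d1poly {l : ℕ} (t : Fin l → ℂ) :
    derivative (∏ k, (X - C (t k))) = ∑ i, ∏ k ∈ univ.erase i, (X - C (t k)) := by
  rw [aux_derivative_finprod]
  simp

private lemma aux_d1 {l : ℕ} (t : Fin l → ℂ) (j : Fin l) :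
    (derivative (∏ k, (X - C (t k)))).eval (t j) = ∏ k ∈ univ.erase j, (t j - t k) := by
  rw [aux_d1poly, eval_finset_sum]
  rw [Finset.sum_eq_single j]
  · simp [eval_prod]
  · intro i _ hij
    rw [eval_prod]
    apply Finset.prod_eq_zero (Finset.mem_erase.2 ⟨Ne.symm hij, mem_univ j⟩)
    simp
  · simp

private lemma aux_d2 {l : ℕ} (t : Fin l → ℂ) (j : Fin l) :
    (derivative (derivative (∏ k, (X - C (t k))))).eval (t j)
      = 2 * ∑ k ∈ univ.erase j, ∏ i ∈ (univ.erase j).erase k, (t j - t i) := by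
  rw [aux_d1poly, derivative_sum]
  have hterm : ∀ i : Fin l,
      (derivative (∏ k ∈ univ.erase i, (X - C (t k)))).eval (t j)
        = ∑ k ∈ univ.erase i, ∏ a ∈ (univ.erase i).erase k, (t j - t a) := by
    intro i
    rw [aux_derivative_finprod]
    simp [eval_finset_sum, eval_prod]
  rw [eval_finset_sum]
  simp only [hterm]
  rw [← Finset.add_sum_erase univ _ (mem_univ j)]
  have h2 : ∑ i ∈ univ.erase j, ∑ k ∈ univ.erase i, ∏ a ∈ (univ.erase i).erase k, (t j - t a)
      = ∑ i ∈ univ.erase j, ∏ a ∈ (univ.erase j).erase i, (t j - t a) := by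
    refine Finset.sum_congr rfl ?_
    intro i hi
    have hij : i ≠ j := (Finset.mem_erase.1 hi).1
    rw [Finset.sum_eq_single j]
    · rw [Finset.erase_right_comm]
    · intro k hk hkj
      apply Finset.prod_eq_zero
        (Finset.mem_erase.2 ⟨Ne.symm hkj, Finset.mem_erase.2 ⟨Ne.symm hij, mem_univ j⟩⟩)
      simp
    · intro h
      exact absurd (Finset.mem_erase.2 ⟨Ne.symm hij, mem_univ j⟩) h
  rw [h2]
  ring

/-- Let `y(x) = ∏ (x - t_j)` be a monic polynomial with simple roots
`t_j` avoiding the `z_s`, and let `T` be a (branch of the) quasi-polynomial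
`∏ (x - z_s)^{m_s}`, characterized by `T'/T = ∑ m_s/(x - z_s)` on an open set `U`
containing the `t_j` and avoiding the `z_s`.  If the Wronskian equation
`Wr(ỹ, y) = T` has a solution `ỹ` with singularities only at `z_1,…,z_n`
(i.e. `ỹ` holomorphic on `U`), then each root `t_j` satisfies the Bethe equation
`∑_s m_s/(t_j - z_s) = ∑_{k ≠ j} 2/(t_j - t_k)`. -/
theorem stmt_10 (n l : ℕ) (z : Fin n → ℂ) (hz : Function.Injective z)
    (m : Fin n → ℂ) (t : Fin l → ℂ) (ht : Function.Injective t)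
    (htz : ∀ j s, t j ≠ z s)
    (U : Set ℂ) (hU : IsOpen U) (hUt : ∀ j, t j ∈ U) (hUz : ∀ s, z s ∉ U)
    (T ytilde : ℂ → ℂ)
    (hT : DifferentiableOn ℂ T U) (hT0 : ∀ x ∈ U, T x ≠ 0)
    (hTlog : ∀ x ∈ U, deriv T x = T x * ∑ s, m s / (x - z s))
    (hyt : DifferentiableOn ℂ ytilde U)
    (hWr : ∀ x ∈ U,
      ytilde x * deriv (fun w => ∏ j, (w - t j)) x - deriv ytilde x * ∏ j, (x - t j)
        = T x) :
    ∀ j, ∑ s, m s / (t j - z s) = ∑ k ∈ univ.erase j, 2 / (t j - t k) := by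
  intro j
  set P : Polynomial ℂ := ∏ k, (X - C (t k)) with hPdef
  have hYeq : ∀ w : ℂ, ∏ k, (w - t k) = P.eval w := by
    intro w; simp [hPdef, eval_prod]
  have hY' : deriv (fun w => ∏ k, (w - t k)) = fun x => P.derivative.eval x := by
    have : (fun w => ∏ k, (w - t k)) = fun w => P.eval w := funext hYeq
    rw [this]; funext x; exact Polynomial.deriv (p := P)
  set g : ℂ → ℂ := fun x => ytilde x * P.derivative.eval x - deriv ytilde x * P.eval x
    with hgdef
  have hg : ∀ x ∈ U, g x = T x := by
    intro x hx
    rw [← hWr x hx, hgdef, hY']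
    simp [hYeq]
  set a := t j with hadef
  have ha : a ∈ U := hUt j
  have hA : AnalyticOnNhd ℂ ytilde U := hyt.analyticOnNhd hU
  have h1 : DifferentiableAt ℂ ytilde a := hyt.differentiableAt (hU.mem_nhds ha)
  have h2 : DifferentiableAt ℂ (deriv ytilde) a := ((hA.deriv) a ha).differentiableAt
  have hd : deriv g a = deriv T a :=
    Filter.EventuallyEq.deriv_eq (Filter.eventuallyEq_of_mem (hU.mem_nhds ha) hg)
  have hP0 : P.eval a = 0 := aux_eval0 t j
  have hD1 : P.derivative.eval a = ∏ k ∈ univ.erase j, (a - t k) := aux_d1 t j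
  have hD2 : P.derivative.derivative.eval a
      = 2 * ∑ k ∈ univ.erase j, ∏ i ∈ (univ.erase j).erase k, (a - t i) := aux_d2 t j
  have hdg : deriv g a = ytilde a * P.derivative.derivative.eval a
      - deriv (deriv ytilde) a * P.eval a := by
    rw [hgdef]
    have hp1 : DifferentiableAt ℂ (fun x => P.derivative.eval x) a :=
      P.derivative.differentiableAt
    have hp2 : DifferentiableAt ℂ (fun x => P.eval x) a := P.differentiableAt
    rw [deriv_fun_sub (h1.fun_mul hp1) (h2.fun_mul hp2), deriv_fun_mul h1 hp1, deriv_fun_mul h2 hp2]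
    rw [Polynomial.deriv (p := P.derivative), Polynomial.deriv (p := P)]
    ring
  have hga : g a = ytilde a * P.derivative.eval a := by
    rw [hgdef]; simp [hP0]
  have hTa : T a = ytilde a * P.derivative.eval a := by rw [← hg a ha, hga]
  have hTne : T a ≠ 0 := hT0 a ha
  have hyne : ytilde a ≠ 0 := by
    intro h; apply hTne; rw [hTa, h, zero_mul]
  have hD1ne : P.derivative.eval a ≠ 0 := by
    intro h; apply hTne; rw [hTa, h, mul_zero]
  have key : ytilde a * (P.derivative.derivative.eval a)
      = ytilde a * (P.derivative.eval a * ∑ s, m s / (a - z s)) := by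
    calc ytilde a * (P.derivative.derivative.eval a)
        = deriv g a := by rw [hdg, hP0, mul_zero, sub_zero]
      _ = deriv T a := hd
      _ = T a * ∑ s, m s / (a - z s) := hTlog a ha
      _ = ytilde a * (P.derivative.eval a * ∑ s, m s / (a - z s)) := by
          rw [hTa]; ring
  have key2 : P.derivative.derivative.eval a
      = P.derivative.eval a * ∑ s, m s / (a - z s) := mul_left_cancel₀ hyne key
  have halg : P.derivative.derivative.eval a
      = P.derivative.eval a * ∑ k ∈ univ.erase j, 2 / (a - t k) := by
    rw [hD2, hD1, Finset.mul_sum, Finset.mul_sum]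
    refine Finset.sum_congr rfl ?_
    intro k hk
    have hkj : k ≠ j := (Finset.mem_erase.1 hk).1
    have hne : a - t k ≠ 0 := by
      rw [hadef]
      exact sub_ne_zero.2 fun h => hkj (ht h).symm
    rw [← Finset.mul_prod_erase _ _ hk]
    field_simp
  exact mul_left_cancel₀ hD1ne (key2.symm.trans halg)
end
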